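/- arXiv:2404.17543 — 5 statements merged into one kernel-verified Lean document; each statement's English description precedes it below -/
import Mathlib

section
/- The function g(x) = (s/p)‖x‖^p on ℝ^d, for p ≥ 2 and s > 0, is uniformly convex of degree p with parameter σ = s·2^{2-p}; that is, g(y) ≥ g(x) + ⟨∇g(x), y - x⟩ + (s·2^{2-p}/p)‖y - x‖^p for all x, y. -/
open RealInnerProductSpace

/-! After multiplying by `p / s` the claim reads
`‖y‖^p ≥ ‖x‖^p + p ‖x‖^(p-2) ⟪x, y - x⟫ + 2^(2-p) ‖y - x‖^p`.
On the line this follows by integrating the strong monotonicity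
`φ b - φ a ≥ 2^(2-p) (b - a)^(p-1)` (for `a ≤ b`) of `φ u = |u|^(p-2) u`, which is superadditivity of
`u ↦ u^(p-1)` when `a, b` have the same sign and the power-mean inequality otherwise.
In general write `⟪x, y⟫ = (ν - μ) ‖x‖ ‖y‖` with `μ + ν = 1`: then
`‖y - x‖² = μ (‖x‖ + ‖y‖)² + ν (‖y‖ - ‖x‖)²`, so by convexity of `u ↦ u^(p/2)` the claim is the
`(μ, ν)`-combination of the scalar cases `(‖x‖, -‖y‖)` and `(‖x‖, ‖y‖)`. -/

section

variable {p : ℝ}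

lemma two_rpow_two_sub_le_one (hp : 2 ≤ p) : (2 : ℝ) ^ (2 - p) ≤ 1 :=
  Real.rpow_le_one_of_one_le_of_nonpos one_le_two (by linarith)

lemma abs_rpow_sub_two_mul_self_of_nonneg (hp : 1 < p) {u : ℝ} (hu : 0 ≤ u) :
    |u| ^ (p - 2) * u = u ^ (p - 1) := by
  rw [abs_of_nonneg hu, ← Real.rpow_add_one' hu (by linarith)]
  ring_nf

lemma abs_rpow_sub_two_mul_self_of_nonpos (hp : 1 < p) {u : ℝ} (hu : u ≤ 0) :
    |u| ^ (p - 2) * u = -(-u) ^ (p - 1) := by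
  rw [abs_of_nonpos hu, ← abs_rpow_sub_two_mul_self_of_nonneg hp (neg_nonneg.2 hu),
    abs_of_nonneg (neg_nonneg.2 hu), mul_neg, neg_neg]

lemma two_rpow_mul_sub_rpow_le_rpow_sub_rpow (hp : 2 ≤ p) {a b : ℝ} (ha : 0 ≤ a)
    (hab : a ≤ b) : 2 ^ (2 - p) * (b - a) ^ (p - 1) ≤ b ^ (p - 1) - a ^ (p - 1) := by
  have h := Real.add_rpow_le_rpow_add ha (sub_nonneg.2 hab) (by linarith : 1 ≤ p - 1)
  rw [add_sub_cancel] at h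
  have := mul_le_of_le_one_left (Real.rpow_nonneg (sub_nonneg.2 hab) (p - 1))
    (two_rpow_two_sub_le_one hp)
  linarith

lemma two_rpow_mul_add_rpow_le_rpow_add_rpow (hp : 2 ≤ p) {a b : ℝ} (ha : 0 ≤ a)
    (hb : 0 ≤ b) : 2 ^ (2 - p) * (a + b) ^ (p - 1) ≤ a ^ (p - 1) + b ^ (p - 1) := by
  lift a to NNReal using ha
  lift b to NNReal using hb
  have h := NNReal.rpow_add_le_mul_rpow_add_rpow a b (by linarith : 1 ≤ p - 1)
  have h2 : (2 : ℝ) ^ (2 - p) * 2 ^ (p - 1 - 1) = 1 := by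
    rw [← Real.rpow_add two_pos, show 2 - p + (p - 1 - 1) = 0 by ring, Real.rpow_zero]
  calc (2 : ℝ) ^ (2 - p) * (a + b : ℝ) ^ (p - 1)
      ≤ 2 ^ (2 - p) * (2 ^ (p - 1 - 1) * (a ^ (p - 1) + b ^ (p - 1) : ℝ)) := by
        gcongr; exact_mod_cast h
    _ = a ^ (p - 1) + b ^ (p - 1) := by rw [← mul_assoc, h2, one_mul]

lemma two_rpow_mul_sub_rpow_le_abs_rpow_mul_self_sub (hp : 2 ≤ p) {a b : ℝ} (hab : a ≤ b) :
    2 ^ (2 - p) * (b - a) ^ (p - 1) ≤ |b| ^ (p - 2) * b - |a| ^ (p - 2) * a := by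
  have hp1 : 1 < p := by linarith
  rcases le_total 0 a with ha | ha
  · rw [abs_rpow_sub_two_mul_self_of_nonneg hp1 ha,
      abs_rpow_sub_two_mul_self_of_nonneg hp1 (ha.trans hab)]
    exact two_rpow_mul_sub_rpow_le_rpow_sub_rpow hp ha hab
  rcases le_total 0 b with hb | hb
  · rw [abs_rpow_sub_two_mul_self_of_nonneg hp1 hb, abs_rpow_sub_two_mul_self_of_nonpos hp1 ha,
      sub_neg_eq_add, sub_eq_add_neg]
    exact two_rpow_mul_add_rpow_le_rpow_add_rpow hp hb (neg_nonneg.2 ha)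
  · rw [abs_rpow_sub_two_mul_self_of_nonpos hp1 ha, abs_rpow_sub_two_mul_self_of_nonpos hp1 hb,
      neg_sub_neg, show b - a = -a - -b by ring]
    exact two_rpow_mul_sub_rpow_le_rpow_sub_rpow hp (neg_nonneg.2 hb) (neg_le_neg hab)

lemma le_of_hasDerivAt_mul_sub_nonneg {f f' : ℝ → ℝ} {a : ℝ}
    (hf : ∀ x, HasDerivAt f (f' x) x) (hf' : ∀ x, 0 ≤ f' x * (x - a)) (b : ℝ) :
    f a ≤ f b := by
  have hcont : Continuous f := continuous_iff_continuousAt.2 fun x ↦ (hf x).continuousAt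
  have hdiff : Differentiable ℝ f := fun x ↦ (hf x).differentiableAt
  rcases le_total a b with hab | hba
  · refine monotoneOn_of_deriv_nonneg (convex_Ici a) hcont.continuousOn hdiff.differentiableOn
      (fun x hx ↦ ?_) Set.self_mem_Ici hab hab
    rw [interior_Ici] at hx
    rw [(hf x).deriv]
    exact nonneg_of_mul_nonneg_left (hf' x) (sub_pos.2 hx)
  · refine antitoneOn_of_deriv_nonpos (convex_Iic a) hcont.continuousOn hdiff.differentiableOn
      (fun x hx ↦ ?_) hba Set.self_mem_Iic hba
    rw [interior_Iic] at hx
    rw [(hf x).deriv]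
    exact nonpos_of_mul_nonneg_left (hf' x) (sub_neg.2 hx)

lemma abs_rpow_add_mul_sub_add_le (hp : 2 ≤ p) (a b : ℝ) :
    |a| ^ p + p * (|a| ^ (p - 2) * a) * (b - a) + 2 ^ (2 - p) * |b - a| ^ p ≤ |b| ^ p := by
  have hp1 : 1 < p := by linarith
  set K : ℝ := 2 ^ (2 - p)
  let f' : ℝ → ℝ := fun u ↦
    p * |u| ^ (p - 2) * u - p * (|a| ^ (p - 2) * a) - K * (p * |u - a| ^ (p - 2) * (u - a))
  have hf : ∀ u, HasDerivAt
      (fun u ↦ |u| ^ p - p * (|a| ^ (p - 2) * a) * (u - a) - K * |u - a| ^ p) (f' u) u := by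
    intro u
    have h := ((hasDerivAt_abs_rpow u hp1).sub
      (((hasDerivAt_id u).sub_const a).const_mul (p * (|a| ^ (p - 2) * a)))).sub
      (((hasDerivAt_abs_rpow (u - a) hp1).comp_sub_const u a).const_mul K)
    exact h.congr_deriv (by ring)
  have hf' : ∀ u, 0 ≤ f' u * (u - a) := by
    intro u
    have hf'u : f' u = p * ((|u| ^ (p - 2) * u - |a| ^ (p - 2) * a)
        - K * (|u - a| ^ (p - 2) * (u - a))) := by
      simp only [f']; ring
    rw [hf'u, mul_assoc]
    refine mul_nonneg (by linarith) ?_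
    rcases le_total a u with hau | hua
    · have h := two_rpow_mul_sub_rpow_le_abs_rpow_mul_self_sub hp hau
      rw [abs_rpow_sub_two_mul_self_of_nonneg hp1 (sub_nonneg.2 hau)]
      exact mul_nonneg (by linarith) (sub_nonneg.2 hau)
    · have h := two_rpow_mul_sub_rpow_le_abs_rpow_mul_self_sub hp hua
      rw [abs_rpow_sub_two_mul_self_of_nonpos hp1 (sub_nonpos.2 hua), neg_sub]
      exact mul_nonneg_of_nonpos_of_nonpos (by linarith) (sub_nonpos.2 hua)
  have h := le_of_hasDerivAt_mul_sub_nonneg hf hf' b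
  simp only [sub_self, abs_zero, Real.zero_rpow (by linarith : p ≠ 0), mul_zero, sub_zero] at h
  linarith

lemma sq_rpow_div_two (z p : ℝ) : (z ^ 2) ^ (p / 2) = |z| ^ p := by
  rw [← sq_abs, ← Real.rpow_natCast, ← Real.rpow_mul (abs_nonneg z)]
  congr 1
  ring

lemma norm_rpow_add_inner_add_le {E : Type*} [NormedAddCommGroup E] [InnerProductSpace ℝ E]
    (hp : 2 ≤ p) (x y : E) :
    ‖x‖ ^ p + p * ⟪‖x‖ ^ (p - 2) • x, y - x⟫ + 2 ^ (2 - p) * ‖y - x‖ ^ p ≤ ‖y‖ ^ p := by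
  obtain ⟨μ, ν, hμ, hν, hμν, ht⟩ : ⟪x, y⟫ ∈ segment ℝ (-(‖x‖ * ‖y‖)) (‖x‖ * ‖y‖) := by
    rw [segment_eq_Icc (neg_le_self (by positivity))]
    exact abs_le.1 (abs_real_inner_le_norm x y)
  simp only [smul_eq_mul] at ht
  have hinner : ⟪‖x‖ ^ (p - 2) • x, y - x⟫
      = ‖x‖ ^ (p - 2) * ‖x‖ * (ν * (‖y‖ - ‖x‖) + μ * (-‖y‖ - ‖x‖)) := by
    rw [real_inner_smul_left, inner_sub_right, real_inner_self_eq_norm_sq, ← ht]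
    linear_combination ‖x‖ ^ (p - 2) * ‖x‖ ^ 2 * hμν
  have hsq : ‖y - x‖ ^ 2 = μ * (‖x‖ + ‖y‖) ^ 2 + ν * (‖y‖ - ‖x‖) ^ 2 := by
    rw [norm_sub_sq_real, real_inner_comm, ← ht]
    linear_combination (-‖x‖ ^ 2 - ‖y‖ ^ 2) * hμν
  have hconv : ‖y - x‖ ^ p ≤ μ * (‖x‖ + ‖y‖) ^ p + ν * |‖y‖ - ‖x‖| ^ p := by
    have h := (convexOn_rpow (p := p / 2) (by linarith)).2 (sq_nonneg (‖x‖ + ‖y‖))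
      (sq_nonneg (‖y‖ - ‖x‖)) hμ hν hμν
    simp only [smul_eq_mul, ← hsq, sq_rpow_div_two, abs_norm] at h
    rwa [abs_of_nonneg (by positivity : 0 ≤ ‖x‖ + ‖y‖)] at h
  have hE1 := abs_rpow_add_mul_sub_add_le hp ‖x‖ ‖y‖
  have hE2 := abs_rpow_add_mul_sub_add_le hp ‖x‖ (-‖y‖)
  rw [show -‖y‖ - ‖x‖ = -(‖x‖ + ‖y‖) by ring, abs_neg, abs_neg,
    abs_of_nonneg (by positivity : 0 ≤ ‖x‖ + ‖y‖)] at hE2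
  simp only [abs_norm] at hE1 hE2
  rw [hinner]
  linear_combination ν * hE1 + μ * hE2 + 2 ^ (2 - p) * hconv + (‖y‖ ^ p - ‖x‖ ^ p) * hμν

end

/-- The power of the Euclidean norm `g(x) = (s/p)‖x‖^p`, with gradient `s‖x‖^{p-2}x`,
is uniformly convex of degree `p` with parameter `σ = s·2^{2-p}`. -/
theorem stmt2 {d : ℕ} (p s : ℝ) (hp : 2 ≤ p) (hs : 0 < s) :
    ∀ x y : EuclideanSpace ℝ (Fin d),
      s / p * ‖y‖ ^ p ≥
        s / p * ‖x‖ ^ p + ⟪(s * ‖x‖ ^ (p - 2)) • x, y - x⟫ +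
          s * (2 : ℝ) ^ (2 - p) / p * ‖y - x‖ ^ p := by
  intro x y
  have hp0 : 0 < p := by linarith
  rw [mul_smul, real_inner_smul_left]
  calc s / p * ‖x‖ ^ p + s * ⟪‖x‖ ^ (p - 2) • x, y - x⟫ + s * 2 ^ (2 - p) / p * ‖y - x‖ ^ p
      = s / p * (‖x‖ ^ p + p * ⟪‖x‖ ^ (p - 2) • x, y - x⟫ + 2 ^ (2 - p) * ‖y - x‖ ^ p) := by
        field_simp
    _ ≤ s / p * ‖y‖ ^ p := by
        gcongr
        exact norm_rpow_add_inner_add_le hp x y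
end

section
/- Let α > 1, c > 0, and let (F_k)_{k≥0} be a nonnegative nonincreasing sequence satisfying F_k - F_{k+1} ≥ c·F_k^α for all k ≥ 0. Then for all k ≥ 0: F_k ≤ (F_0^{α-1} / (F_0^{α-1}·c·(α-1)·k + 1))^{1/(α-1)}. -/
/-!
Put `β = α - 1`. By convexity of `x ↦ x ^ (-β)`, its tangent line at `F k` lies below its
graph, so `F (k+1) ^ (-β) ≥ F k ^ (-β) + β (F k - F (k+1)) / F k ^ α ≥ F k ^ (-β) + c β`.
Hence `F k ^ (-β) ≥ F 0 ^ (-β) + c β k` as long as `F k > 0`, and solving for `F k` gives the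
bound.
-/

open Real

lemma one_add_mul_one_sub_le_rpow_neg {β t : ℝ} (hβ : 0 ≤ β) (ht : 0 < t) :
    1 + β * (1 - t) ≤ t ^ (-β) := by
  rw [rpow_def_of_pos ht]
  have hlog : log t ≤ t - 1 := log_le_sub_one_of_pos ht
  have hexp : log t * -β + 1 ≤ exp (log t * -β) := add_one_le_exp _
  nlinarith

-- The tangent line at `a` of the convex function `x ↦ x ^ (-β)` lies below its graph.
lemma rpow_neg_add_le {β a b : ℝ} (hβ : 0 ≤ β) (ha : 0 < a) (hb : 0 < b) :
    a ^ (-β) + β * (a - b) / a ^ (β + 1) ≤ b ^ (-β) := by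
  have hsplit : b ^ (-β) = a ^ (-β) * (b / a) ^ (-β) := by
    rw [div_rpow hb.le ha.le, mul_div_cancel₀ _ (rpow_pos_of_pos ha _).ne']
  have htangent : a ^ (-β) + β * (a - b) / a ^ (β + 1) = a ^ (-β) * (1 + β * (1 - b / a)) := by
    rw [rpow_add ha, rpow_one, rpow_neg ha.le]
    have : a ^ β ≠ 0 := (rpow_pos_of_pos ha _).ne'
    field_simp
  rw [htangent, hsplit]
  exact mul_le_mul_of_nonneg_left (one_add_mul_one_sub_le_rpow_neg hβ (div_pos hb ha))
    (rpow_nonneg ha.le _)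

lemma rpow_neg_add_le_of_mul_rpow_le_sub {α c x y : ℝ} (hα : 1 ≤ α) (hx : 0 < x) (hy : 0 < y)
    (h : c * x ^ α ≤ x - y) : x ^ (-(α - 1)) + c * (α - 1) ≤ y ^ (-(α - 1)) := by
  have hslope : c ≤ (x - y) / x ^ α := (le_div_iff₀ (rpow_pos_of_pos hx _)).2 h
  have htangent := rpow_neg_add_le (sub_nonneg.2 hα) hx hy
  rw [sub_add_cancel, mul_div_assoc] at htangent
  nlinarith [mul_le_mul_of_nonneg_left hslope (sub_nonneg.2 hα)]

lemma le_rpow_div_of_rpow_neg_add_le {β d x y : ℝ} (hβ : 0 < β) (hd : 0 ≤ d) (hx : 0 < x)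
    (hy : 0 < y) (h : y ^ (-β) + d ≤ x ^ (-β)) : x ≤ (y ^ β / (y ^ β * d + 1)) ^ (1 / β) := by
  have hxβ : 0 < x ^ β := rpow_pos_of_pos hx β
  have hyβ : 0 < y ^ β := rpow_pos_of_pos hy β
  rw [rpow_neg hx.le, rpow_neg hy.le] at h
  have hmul : x ^ β * (y ^ β * d + 1) ≤ y ^ β := by
    have := mul_le_mul_of_nonneg_left h (mul_pos hxβ hyβ).le
    field_simp at this
    linarith
  have hden : 0 < y ^ β * d + 1 := by positivity
  rw [one_div, le_rpow_inv_iff_of_pos hx.le (div_pos hyβ hden).le hβ, le_div_iff₀ hden]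
  exact hmul

lemma antitone_of_mul_rpow_le_sub {α c : ℝ} {F : ℕ → ℝ} (hc : 0 ≤ c) (hnn : ∀ k, 0 ≤ F k)
    (hrec : ∀ k, c * F k ^ α ≤ F k - F (k + 1)) : Antitone F :=
  antitone_nat_of_succ_le fun k => by nlinarith [hrec k, mul_nonneg hc (rpow_nonneg (hnn k) α)]

lemma rpow_neg_add_mul_le_of_mul_rpow_le_sub {α c : ℝ} {F : ℕ → ℝ} (hα : 1 ≤ α) (hc : 0 ≤ c)
    (hnn : ∀ k, 0 ≤ F k) (hrec : ∀ k, c * F k ^ α ≤ F k - F (k + 1)) :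
    ∀ k : ℕ, 0 < F k → F 0 ^ (-(α - 1)) + c * (α - 1) * k ≤ F k ^ (-(α - 1)) := by
  intro k
  induction k with
  | zero => simp
  | succ k ih =>
    intro hpos
    have hFk : 0 < F k :=
      hpos.trans_le (antitone_of_mul_rpow_le_sub hc hnn hrec k.le_succ)
    have := rpow_neg_add_le_of_mul_rpow_le_sub hα hFk hpos (hrec k)
    push_cast
    linarith [ih hFk]

theorem stmt8_general (α c : ℝ) (hα : 1 < α) (hc : 0 < c) (F : ℕ → ℝ)
    (hnn : ∀ k, 0 ≤ F k)
    (hrec : ∀ k, F k - F (k + 1) ≥ c * F k ^ α) :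
    ∀ k : ℕ, F k ≤
      (F 0 ^ (α - 1) / (F 0 ^ (α - 1) * c * (α - 1) * k + 1)) ^ (1 / (α - 1)) := by
  intro k
  have hβ : 0 < α - 1 := sub_pos.2 hα
  have hrate : 0 ≤ c * (α - 1) * k := by positivity
  rcases (hnn k).eq_or_lt with hzero | hpos
  · have hF0β : 0 ≤ F 0 ^ (α - 1) := rpow_nonneg (hnn 0) _
    rw [← hzero, mul_assoc, mul_assoc]
    positivity
  · have hdecay := rpow_neg_add_mul_le_of_mul_rpow_le_sub hα.le hc.le hnn hrec k hpos
    have hF0 : 0 < F 0 := hpos.trans_le (antitone_of_mul_rpow_le_sub hc.le hnn hrec k.zero_le)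
    simpa only [mul_assoc] using le_rpow_div_of_rpow_neg_add_le hβ hrate hpos hF0 hdecay

/-- Rate of convergence for a nonnegative nonincreasing sequence satisfying
`F_k - F_{k+1} ≥ c·F_k^α` with `α > 1`. -/
theorem stmt8 (α c : ℝ) (hα : 1 < α) (hc : 0 < c) (F : ℕ → ℝ)
    (hnn : ∀ k, 0 ≤ F k) (hmono : ∀ k, F (k + 1) ≤ F k)
    (hrec : ∀ k, F k - F (k + 1) ≥ c * F k ^ α) :
    ∀ k : ℕ, F k ≤
      (F 0 ^ (α - 1) / (F 0 ^ (α - 1) * c * (α - 1) * k + 1)) ^ (1 / (α - 1)) :=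
  stmt8_general α c hα hc F hnn hrec
end

section
/- Consider the one-dimensional recursion r_{k+1} = (1 - η_k·s·r_k^{p-2})·r_k + η_k·s·r^{p-1} (gradient descent on f with μ = 0), with r_0 = 0, p > 2, s > 0, target r > 0, and step sizes 0 < η_k ≤ 1/(L + s(p-1)r^{p-2}). If r_k ≤ r, then r - r_{k+1} ≥ (r - r_k)·(1 - s(p-1)r^{p-2}/(L + s(p-1)r^{p-2})). -/
/-- One step of the one-dimensional gradient-descent recursion (with `μ = 0`) on the
resisting construction: the gap `r - r_k` contracts by at most the factor
`1 - s(p-1)r^{p-2}/(L + s(p-1)r^{p-2})`. Here `r_k` arises from the recursion started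
at `r_0 = 0`, so `0 ≤ r_k`. -/
theorem stmt10 (p s L r η rk rk1 : ℝ) (hp : 2 < p) (hs : 0 < s) (hL : 0 ≤ L)
    (hr : 0 < r) (hη : 0 < η) (hηle : η ≤ 1 / (L + s * (p - 1) * r ^ (p - 2)))
    (hrk0 : 0 ≤ rk) (hrkr : rk ≤ r)
    (hrec : rk1 = (1 - η * s * rk ^ (p - 2)) * rk + η * s * r ^ (p - 1)) :
    r - rk1 ≥ (r - rk) * (1 - s * (p - 1) * r ^ (p - 2) / (L + s * (p - 1) * r ^ (p - 2))) := by
  have hR2 : (0:ℝ) < r ^ (p - 2) := Real.rpow_pos_of_pos hr _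
  have hR1 : (0:ℝ) < r ^ (p - 1) := Real.rpow_pos_of_pos hr _
  have hA : 0 < s * (p - 1) * r ^ (p - 2) :=
    mul_pos (mul_pos hs (by linarith)) hR2
  have hD : 0 < L + s * (p - 1) * r ^ (p - 2) := by linarith
  -- r^(p-1) = r^(p-2) * r
  have hr1 : r ^ (p - 1) = r ^ (p - 2) * r := by
    rw [show p - 1 = (p - 2) + 1 by ring, Real.rpow_add_one hr.ne']
  -- rk^(p-2) * rk = rk^(p-1)
  have hpow : rk ^ (p - 2) * rk = rk ^ (p - 1) := by
    rcases eq_or_lt_of_le hrk0 with h | h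
    · rw [← h, Real.zero_rpow (by linarith), Real.zero_rpow (by linarith), mul_zero]
    · rw [show p - 1 = (p - 2) + 1 by ring, Real.rpow_add_one h.ne']
  -- convexity inequality
  have key : r ^ (p - 1) - rk ^ (p - 1) ≤ (p - 1) * r ^ (p - 2) * (r - rk) := by
    have ht0 : 0 ≤ rk / r := div_nonneg hrk0 hr.le
    have ht : -1 ≤ rk / r - 1 := by linarith
    have hb := one_add_mul_self_le_rpow_one_add ht (show (1:ℝ) ≤ p - 1 by linarith)
    rw [show 1 + (rk / r - 1) = rk / r by ring, Real.div_rpow hrk0 hr.le] at hb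
    have hb' := (le_div_iff₀ hR1).mp hb
    have hrw : (1 + (p - 1) * (rk / r - 1)) * r ^ (p - 1)
        = r ^ (p - 1) + (p - 1) * rk * r ^ (p - 2) - (p - 1) * r ^ (p - 1) := by
      rw [hr1]; field_simp; ring
    rw [hrw] at hb'
    nlinarith [hb', hr1]
  have hgap : 0 ≤ r - rk := by linarith
  have hηA : η * (s * (p - 1) * r ^ (p - 2)) ≤
      s * (p - 1) * r ^ (p - 2) / (L + s * (p - 1) * r ^ (p - 2)) := by
    rw [div_eq_mul_inv, mul_comm]
    have : η ≤ (L + s * (p - 1) * r ^ (p - 2))⁻¹ := by rwa [one_div] at hηle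
    exact mul_le_mul_of_nonneg_left this hA.le
  have hηs : 0 < η * s := mul_pos hη hs
  have h1 : η * s * (r ^ (p - 1) - rk ^ (p - 1)) ≤
      η * (s * (p - 1) * r ^ (p - 2)) * (r - rk) := by
    have := mul_le_mul_of_nonneg_left key hηs.le
    nlinarith [this]
  have h2 : η * (s * (p - 1) * r ^ (p - 2)) * (r - rk) ≤
      s * (p - 1) * r ^ (p - 2) / (L + s * (p - 1) * r ^ (p - 2)) * (r - rk) :=
    mul_le_mul_of_nonneg_right hηA hgap
  have hrk1 : r - rk1 = (r - rk) - η * s * (r ^ (p - 1) - rk ^ (p - 1)) := by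
    rw [hrec, ← hpow]; ring
  nlinarith [h1, h2, hrk1]
end

section
/- Fix p > 2, s > 0, L > 0, r > 0, μ = 0. Consider the composite gradient method iteration defined implicitly by L·r_{k+1} + s·r_{k+1}^{p−1} = L·r_k + s·r^{p−1} with r_0 = 0 (one-dimensional reduction with μ = 0). Then for each k ≥ 0, if 0 ≤ r_k ≤ r, we have 0 ≤ r_{k+1} ≤ r and r − r_{k+1} ≥ (r − r_k)·L/(L + s(p−1)r^{p−2}). -/
/-! The map `t ↦ L t + s t^{p-1}` is strictly increasing on `t ≥ 0`, and the right-hand side of the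
implicit equation is at most its value at `r`; this gives `r_{k+1} ≤ r`. Subtracting `L r + s r^{p-1}`
from both sides of the equation, the gap `r - r_{k+1}` is controlled by the tangent-line bound
`r^{p-1} - r_{k+1}^{p-1} ≤ (p-1) r^{p-2} (r - r_{k+1})` of the convex function `t ↦ t^{p-1}`,
which in turn is Bernoulli's inequality applied to `r_{k+1} / r`. -/

namespace Real

theorem rpow_sub_rpow_le_mul_rpow_sub_one_mul {x y q : ℝ} (hx : 0 < x) (hy : 0 ≤ y) (hq : 1 ≤ q) :
    x ^ q - y ^ q ≤ q * x ^ (q - 1) * (x - y) := by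
  have bernoulli := one_add_mul_self_le_rpow_one_add (s := y / x - 1)
    (by linarith [div_nonneg hy hx.le]) hq
  rw [add_sub_cancel, div_rpow hy hx.le, le_div_iff₀ (rpow_pos_of_pos hx q)] at bernoulli
  have expand : q * x ^ (q - 1) * (x - y) = x ^ q * q * (1 - y / x) := by
    rw [rpow_sub_one hx.ne']
    field_simp
  rw [expand]
  linear_combination bernoulli

theorem strictMonoOn_mul_add_mul_rpow {L s q : ℝ} (hL : 0 < L) (hs : 0 ≤ s) (hq : 0 < q) :
    StrictMonoOn (fun t ↦ L * t + s * t ^ q) (Set.Ici 0) := fun _ hx _ _ hxy ↦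
  add_lt_add_of_lt_of_le (mul_lt_mul_of_pos_left hxy hL)
    (mul_le_mul_of_nonneg_left (rpow_le_rpow hx hxy.le hq.le) hs)

end Real

theorem stmt14_general (p s L r rk rk1 : ℝ) (hp : 2 < p) (hs : 0 < s) (hL : 0 < L) (hr : 0 < r)
    (hrkr : rk ≤ r) (hrk10 : 0 ≤ rk1)
    (heq : L * rk1 + s * rk1 ^ (p - 1) = L * rk + s * r ^ (p - 1)) :
    rk1 ≤ r ∧ r - rk1 ≥ (r - rk) * L / (L + s * (p - 1) * r ^ (p - 2)) := by
  have hq : 1 ≤ p - 1 := by linarith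
  have hmono := Real.strictMonoOn_mul_add_mul_rpow hL hs.le (by linarith : 0 < p - 1)
  have hle : rk1 ≤ r := (hmono.le_iff_le hrk10 hr.le).mp <| by
    change L * rk1 + s * rk1 ^ (p - 1) ≤ L * r + s * r ^ (p - 1)
    rw [heq]
    gcongr
  refine ⟨hle, ?_⟩
  have tangent := Real.rpow_sub_rpow_le_mul_rpow_sub_one_mul hr hrk10 hq
  rw [sub_sub, one_add_one_eq_two] at tangent
  rw [ge_iff_le, div_le_iff₀ (by positivity)]
  linear_combination heq + s * tangent

/-- One step of the one-dimensional reduction of the composite gradient method (with `μ = 0`):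
if `0 ≤ r_k ≤ r` and `r_{k+1} ≥ 0` satisfies `L·r_{k+1} + s·r_{k+1}^{p−1} = L·r_k + s·r^{p−1}`,
then `r_{k+1} ≤ r` and the gap contracts by at most the factor `L/(L + s(p−1)r^{p−2})`. -/
theorem stmt14 (p s L r rk rk1 : ℝ) (hp : 2 < p) (hs : 0 < s) (hL : 0 < L) (hr : 0 < r)
    (hrk0 : 0 ≤ rk) (hrkr : rk ≤ r) (hrk10 : 0 ≤ rk1)
    (heq : L * rk1 + s * rk1 ^ (p - 1) = L * rk + s * r ^ (p - 1)) :
    rk1 ≤ r ∧ r - rk1 ≥ (r - rk) * L / (L + s * (p - 1) * r ^ (p - 2)) :=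
  stmt14_general p s L r rk rk1 hp hs hL hr hrkr hrk10 heq
end

section
/- Let A be a symmetric positive semidefinite d×d matrix, s > 0, p ≥ 2, b ∈ ℝ^d, and x⋆ the unique solution of Ax + s‖x‖^{p−2}x = b. Then x⋆ lies in the Krylov subspace span{b, A b, A² b, …, A^{d−1} b}. -/
/-!
Write `c = s‖x⋆‖^(p-2)`; if `x⋆ ≠ 0` then `c > 0` and `x⋆` solves `(A + cI) x = b`, where `A + cI`
is positive definite, hence injective. By Cayley–Hamilton the Krylov space of order `d` contains
`q(A) b` for every polynomial `q`, so it contains `b` and is invariant under `A + cI`. An injective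
map is onto a finite-dimensional invariant subspace, so `b = (A + cI) y` for some `y` in the Krylov
space, and `y = x⋆` by injectivity.
-/

open Matrix Polynomial

theorem Submodule.mem_of_injective_of_apply_mem {K V : Type*} [Field K] [AddCommGroup V]
    [Module K V] {W : Submodule K V} [FiniteDimensional K W] {g : V →ₗ[K] V}
    (hg : Function.Injective g) (hW : W ≤ W.comap g) {x : V} (hx : g x ∈ W) : x ∈ W := by
  have hmap : W.map g = W :=
    Submodule.eq_of_le_of_finrank_eq (Submodule.map_le_iff_le_comap.mpr hW)
      (Submodule.equivMapOfInjective g hg W).finrank_eq.symm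
  rw [← Submodule.comap_map_eq_of_injective hg W, hmap]
  exact hx

namespace Matrix

variable {K n : Type*} [Field K] [Fintype n] [DecidableEq n]

def krylovSubspace (A : Matrix n n K) (b : n → K) (k : ℕ) : Submodule K (n → K) :=
  Submodule.span K (Set.range fun i : Fin k => (A ^ (i : ℕ)) *ᵥ b)

variable {A : Matrix n n K} {b : n → K} {k : ℕ}

theorem pow_mulVec_mem_krylovSubspace {i : ℕ} (hi : i < k) :
    (A ^ i) *ᵥ b ∈ A.krylovSubspace b k :=
  Submodule.subset_span ⟨⟨i, hi⟩, rfl⟩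

theorem aeval_mulVec_mem_krylovSubspace (hk : Fintype.card n ≤ k) (q : K[X]) :
    aeval A q *ᵥ b ∈ A.krylovSubspace b k := by
  rw [← aeval_modByMonic_eq_self_of_root A.aeval_self_charpoly]
  rcases eq_or_ne A.charpoly 1 with h1 | h1
  · simp [h1]
  have hdeg : (q %ₘ A.charpoly).natDegree < k := by
    simpa using (natDegree_modByMonic_lt q A.charpoly_monic h1).trans_le (by simpa using hk)
  rw [aeval_eq_sum_range' hdeg, sum_mulVec]
  refine Submodule.sum_mem _ fun i hi => ?_
  rw [smul_mulVec]
  exact Submodule.smul_mem _ _ (pow_mulVec_mem_krylovSubspace (Finset.mem_range.mp hi))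

theorem aeval_mulVec_mem_krylovSubspace_of_mem (hk : Fintype.card n ≤ k) (q : K[X]) {v : n → K}
    (hv : v ∈ A.krylovSubspace b k) : aeval A q *ᵥ v ∈ A.krylovSubspace b k := by
  induction hv using Submodule.span_induction with
  | mem v hv =>
    obtain ⟨i, rfl⟩ := hv
    rw [mulVec_mulVec, ← aeval_X_pow (R := K), ← map_mul]
    exact aeval_mulVec_mem_krylovSubspace hk _
  | zero => simp
  | add v w _ _ hv hw => simpa [mulVec_add] using Submodule.add_mem _ hv hw
  | smul c v _ hv => simpa [mulVec_smul] using Submodule.smul_mem _ c hv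

theorem mem_krylovSubspace_of_isUnit_aeval (hk : Fintype.card n ≤ k) {q : K[X]}
    (hq : IsUnit (aeval A q)) {x : n → K} (hx : aeval A q *ᵥ x = b) :
    x ∈ A.krylovSubspace b k := by
  refine Submodule.mem_of_injective_of_apply_mem (g := (aeval A q).mulVecLin)
    (mulVec_injective_iff_isUnit.mpr hq)
    (fun v hv => aeval_mulVec_mem_krylovSubspace_of_mem hk q hv) ?_
  rw [mulVecLin_apply, hx]
  simpa using aeval_mulVec_mem_krylovSubspace (A := A) (b := b) hk 1

end Matrix

theorem Matrix.PosSemidef.mem_krylovSubspace_of_mulVec_add_smul_eq {n : Type*} [Fintype n]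
    [DecidableEq n] {A : Matrix n n ℝ} (hA : A.PosSemidef) {c : ℝ} (hc : 0 < c) {x b : n → ℝ}
    (hx : A *ᵥ x + c • x = b) : x ∈ A.krylovSubspace b (Fintype.card n) := by
  have haeval : aeval A (X + C c) = A + c • 1 := by
    simp [Algebra.algebraMap_eq_smul_one]
  refine mem_krylovSubspace_of_isUnit_aeval le_rfl (q := X + C c) ?_ ?_
  · rw [haeval]
    exact (PosDef.posSemidef_add hA (PosDef.one.smul hc)).isUnit
  · rw [haeval, add_mulVec, smul_mulVec, one_mulVec, hx]

theorem stmt15_general {d : ℕ} (A : Matrix (Fin d) (Fin d) ℝ) (hA : A.PosSemidef)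
    (b : EuclideanSpace ℝ (Fin d)) (p s : ℝ) (hs : 0 < s)
    (xs : EuclideanSpace ℝ (Fin d))
    (hstar : (EuclideanSpace.equiv (Fin d) ℝ).symm (A.mulVec xs)
      + (s * ‖xs‖ ^ (p - 2)) • xs = b) :
    xs ∈ Submodule.span ℝ
      (Set.range fun i : Fin d =>
        (EuclideanSpace.equiv (Fin d) ℝ).symm ((A ^ (i : ℕ)).mulVec b)) := by
  obtain rfl | hxs := eq_or_ne xs 0
  · exact Submodule.zero_mem _
  have hc : 0 < s * ‖xs‖ ^ (p - 2) := mul_pos hs (Real.rpow_pos_of_pos (norm_pos_iff.mpr hxs) _)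
  have hkrylov := hA.mem_krylovSubspace_of_mulVec_add_smul_eq hc
    (congrArg (EuclideanSpace.equiv (Fin d) ℝ) hstar)
  rw [Fintype.card_fin] at hkrylov
  have hrange : (Set.range fun i : Fin d =>
      (EuclideanSpace.equiv (Fin d) ℝ).symm ((A ^ (i : ℕ)).mulVec b)) =
      (EuclideanSpace.equiv (Fin d) ℝ).toLinearEquiv.symm '' Set.range fun i : Fin d =>
        (A ^ (i : ℕ)) *ᵥ (EuclideanSpace.equiv (Fin d) ℝ b) := by
    rw [← Set.range_comp]; rfl
  rw [hrange, Submodule.span_image_linearEquiv, Submodule.mem_map_equiv]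
  exact hkrylov

/-- The solution of the regularized quadratic problem lies in the Krylov subspace
`span{b, Ab, …, A^{d−1}b}`. -/
theorem stmt15 {d : ℕ} (A : Matrix (Fin d) (Fin d) ℝ) (hA : A.PosSemidef)
    (b : EuclideanSpace ℝ (Fin d)) (p s : ℝ) (hp : 2 ≤ p) (hs : 0 < s)
    (xs : EuclideanSpace ℝ (Fin d))
    (hstar : (EuclideanSpace.equiv (Fin d) ℝ).symm (A.mulVec xs)
      + (s * ‖xs‖ ^ (p - 2)) • xs = b) :
    xs ∈ Submodule.span ℝ
      (Set.range fun i : Fin d =>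
        (EuclideanSpace.equiv (Fin d) ℝ).symm ((A ^ (i : ℕ)).mulVec b)) :=
  stmt15_general A hA b p s hs xs hstar
end
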